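/- There is an absolute constant $C$ such that for all integers $m\geq 1$ and $n\geq 2$: $\sup_{2\leq \varphi\leq n} \frac{1}{\varphi}\sum_{2\leq d<\varphi} \frac{1}{d}\sum_{1\leq \ell< d} e^{-m\pi^2\ell^2/(2d^2)} \leq \frac{C}{\sqrt{m}}$. -/
import Mathlib

open Real

lemma gauss_sum_le (b : ℝ) (hb : 0 < b) (d : ℕ) :
    (∑ ℓ ∈ Finset.Ico 1 d, Real.exp (-b * (ℓ : ℝ) ^ 2)) ≤ Real.sqrt (π / b) := by
  have hanti : AntitoneOn (fun x : ℝ => Real.exp (-b * x ^ 2))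
      (Set.Icc (0 : ℝ) (0 + ((d - 1 : ℕ) : ℝ))) := by
    intro x hx y hy hxy
    simp only
    apply Real.exp_le_exp.2
    have : x ^ 2 ≤ y ^ 2 := pow_le_pow_left₀ hx.1 hxy 2
    nlinarith
  have h1 := hanti.sum_le_integral
  have hsum : (∑ ℓ ∈ Finset.Ico 1 d, Real.exp (-b * (ℓ : ℝ) ^ 2)) =
      ∑ i ∈ Finset.range (d - 1), Real.exp (-b * ((0 : ℝ) + ((i + 1 : ℕ) : ℝ)) ^ 2) := by
    rw [Finset.sum_Ico_eq_sum_range]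
    apply Finset.sum_congr rfl
    intro i _
    push_cast
    ring_nf
  rw [hsum]
  calc _ ≤ ∫ x in (0:ℝ)..(0 + ((d - 1 : ℕ) : ℝ)), Real.exp (-b * x ^ 2) := h1
    _ ≤ ∫ x : ℝ, Real.exp (-b * x ^ 2) := by
        rw [intervalIntegral.integral_of_le (by positivity)]
        exact MeasureTheory.setIntegral_le_integral (integrable_exp_neg_mul_sq hb)
          (Filter.Eventually.of_forall fun x => (Real.exp_pos _).le)
    _ = Real.sqrt (π / b) := integral_gaussian b

theorem stmt_6 :
    ∃ C : ℝ, 0 < C ∧ ∀ m n : ℕ, 1 ≤ m → 2 ≤ n → ∀ φ : ℕ, 2 ≤ φ → φ ≤ n →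
      (1 / (φ : ℝ)) * ∑ d ∈ Finset.Ico 2 φ, (1 / (d : ℝ)) *
          ∑ ℓ ∈ Finset.Ico 1 d, Real.exp (-(m : ℝ) * Real.pi ^ 2 * ℓ ^ 2 / (2 * d ^ 2))
        ≤ C / Real.sqrt m := by
  refine ⟨2, by norm_num, ?_⟩
  intro m n hm hn φ hφ hφn
  have hm0 : (0 : ℝ) < m := by exact_mod_cast hm
  have hφ0 : (0 : ℝ) < φ := by positivity
  have key : ∀ d ∈ Finset.Ico 2 φ,
      (1 / (d : ℝ)) * ∑ ℓ ∈ Finset.Ico 1 d,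
        Real.exp (-(m : ℝ) * Real.pi ^ 2 * ℓ ^ 2 / (2 * d ^ 2))
      ≤ Real.sqrt 2 / Real.sqrt m := by
    intro d hd
    have hd2 : 2 ≤ d := (Finset.mem_Ico.1 hd).1
    have hd0 : (0 : ℝ) < d := by positivity
    set b : ℝ := m * π ^ 2 / (2 * d ^ 2) with hbdef
    have hb : 0 < b := by positivity
    have hterm : ∀ ℓ : ℕ, -(m : ℝ) * Real.pi ^ 2 * ℓ ^ 2 / (2 * d ^ 2)
        = -b * (ℓ : ℝ) ^ 2 := by
      intro ℓ; rw [hbdef]; field_simp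
    have h1 : (∑ ℓ ∈ Finset.Ico 1 d,
        Real.exp (-(m : ℝ) * Real.pi ^ 2 * ℓ ^ 2 / (2 * d ^ 2)))
        ≤ Real.sqrt (π / b) := by
      simp_rw [hterm]
      exact gauss_sum_le b hb d
    have h2 : Real.sqrt (π / b) ≤ Real.sqrt 2 * d / Real.sqrt m := by
      have hpib : π / b = 2 * d ^ 2 / (m * π) := by
        rw [hbdef]; field_simp
      have hle : π / b ≤ 2 * d ^ 2 / m := by
        rw [hpib]
        apply div_le_div_of_nonneg_left (by positivity) (by positivity)
        nlinarith [Real.pi_gt_three]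
      calc Real.sqrt (π / b) ≤ Real.sqrt (2 * d ^ 2 / m) := Real.sqrt_le_sqrt hle
        _ = Real.sqrt 2 * d / Real.sqrt m := by
            rw [show (2 * (d:ℝ) ^ 2 / m) = (Real.sqrt 2 * d / Real.sqrt m) ^ 2 by
              rw [div_pow, mul_pow, Real.sq_sqrt (by norm_num), Real.sq_sqrt hm0.le]]
            exact Real.sqrt_sq (by positivity)
    calc (1 / (d : ℝ)) * ∑ ℓ ∈ Finset.Ico 1 d,
          Real.exp (-(m : ℝ) * Real.pi ^ 2 * ℓ ^ 2 / (2 * d ^ 2))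
        ≤ (1 / (d : ℝ)) * (Real.sqrt 2 * d / Real.sqrt m) := by
          exact mul_le_mul_of_nonneg_left (h1.trans h2) (by positivity)
      _ = Real.sqrt 2 / Real.sqrt m := by field_simp
  have hsum : (∑ d ∈ Finset.Ico 2 φ, (1 / (d : ℝ)) *
      ∑ ℓ ∈ Finset.Ico 1 d, Real.exp (-(m : ℝ) * Real.pi ^ 2 * ℓ ^ 2 / (2 * d ^ 2)))
      ≤ φ * (Real.sqrt 2 / Real.sqrt m) := by
    calc _ ≤ ∑ _d ∈ Finset.Ico 2 φ, (Real.sqrt 2 / Real.sqrt m) :=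
          Finset.sum_le_sum key
      _ = (φ - 2 : ℕ) * (Real.sqrt 2 / Real.sqrt m) := by
          rw [Finset.sum_const, Nat.card_Ico]; simp
      _ ≤ φ * (Real.sqrt 2 / Real.sqrt m) := by
          apply mul_le_mul_of_nonneg_right _ (by positivity)
          exact_mod_cast Nat.cast_le.2 (Nat.sub_le φ 2)
  calc (1 / (φ : ℝ)) * ∑ d ∈ Finset.Ico 2 φ, (1 / (d : ℝ)) *
          ∑ ℓ ∈ Finset.Ico 1 d, Real.exp (-(m : ℝ) * Real.pi ^ 2 * ℓ ^ 2 / (2 * d ^ 2))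
      ≤ (1 / (φ : ℝ)) * (φ * (Real.sqrt 2 / Real.sqrt m)) :=
        mul_le_mul_of_nonneg_left hsum (by positivity)
    _ = Real.sqrt 2 / Real.sqrt m := by field_simp
    _ ≤ 2 / Real.sqrt m := by
        gcongr
        nlinarith [Real.sq_sqrt (show (0:ℝ) ≤ 2 by norm_num), Real.sqrt_nonneg 2]
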